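/- Let 0 < α < 1, let f : ℝ^k → ℝ be a C¹ function which is C² in a neighborhood of a point x_∞, and let {x_n} be a sequence in ℝ^k with positive numbers {δ_n} such that x_{n+1} = x_n − δ_n ∇f(x_n) and f(x_{n+1}) − f(x_n) ≤ −α δ_n ‖∇f(x_n)‖² for all n. Assume that x_n converges to x_∞, that ∇f(x_∞) = 0, that the Hessian ∇²f(x_∞) is invertible, and that ∇f(x_n) ≠ 0 for all n. Then the sequence {δ_n} is bounded, i.e., there exists M > 0 with δ_n ≤ M for all n. -/

import Mathlib

/-!
Near a non-degenerate critical point `x∞` the gradient is comparable to the displacement: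
`‖y - x∞‖ = O(‖∇f y‖)` because the Hessian is invertible, and `‖∇f y‖ = O(‖y - x∞‖)`, which by the
mean value inequality gives `f y - f x∞ = O(‖y - x∞‖²)`. Together, `f y - f x∞ = O(‖∇f y‖²)`.
Along the Armijo sequence `f (x n)` decreases to `f x∞`, so
`α δₙ ‖∇f(xₙ)‖² ≤ f xₙ - f xₙ₊₁ ≤ f xₙ - f x∞ ≤ K ‖∇f(xₙ)‖²` for large `n`, i.e. `δₙ ≤ K / α`.
-/

open Filter Topology Asymptotics

section Gradient

variable {F : Type*} [NormedAddCommGroup F] [InnerProductSpace ℝ F] [CompleteSpace F]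

theorem norm_fderiv_eq_norm_gradient (f : F → ℝ) (y : F) : ‖fderiv ℝ f y‖ = ‖gradient f y‖ :=
  ((InnerProductSpace.toDual ℝ F).symm.norm_map _).symm

theorem ContDiffAt.differentiableAt_gradient {f : F → ℝ} {x : F} (hf : ContDiffAt ℝ 2 f x) :
    DifferentiableAt ℝ (gradient f) x :=
  (InnerProductSpace.toDual ℝ F).symm.comp_differentiableAt_iff.mpr
    ((hf.fderiv_right (m := 1) le_rfl).differentiableAt one_ne_zero)

end Gradient

theorem HasFDerivAt.isBigO_sub_rev {𝕜 E G : Type*} [NontriviallyNormedField 𝕜]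
    [NormedAddCommGroup E] [NormedSpace 𝕜 E] [NormedAddCommGroup G] [NormedSpace 𝕜 G]
    {g : E → G} {A : E ≃L[𝕜] G} {x₀ : E} (h : HasFDerivAt g (A : E →L[𝕜] G) x₀) :
    (fun y => y - x₀) =O[𝓝 x₀] fun y => g y - g x₀ := by
  have hA : (fun y => y - x₀) =O[𝓝 x₀] fun y => A (y - x₀) := A.isBigO_sub_rev _ _
  have hrem : (fun y => g y - g x₀ - A (y - x₀)) =o[𝓝 x₀] fun y => A (y - x₀) :=
    h.isLittleO.trans_isBigO hA
  simpa using hA.trans hrem.right_isBigO_add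

theorem isBigO_sub_sq_of_fderiv_isBigO {E G : Type*} [NormedAddCommGroup E] [NormedSpace ℝ E]
    [NormedAddCommGroup G] [NormedSpace ℝ G] {f : E → G} {x₀ : E}
    (hdiff : ∀ᶠ y in 𝓝 x₀, DifferentiableAt ℝ f y)
    (hf' : fderiv ℝ f =O[𝓝 x₀] fun y => y - x₀) :
    (fun y => f y - f x₀) =O[𝓝 x₀] fun y => ‖y - x₀‖ ^ 2 := by
  obtain ⟨c, hc0, hc⟩ := hf'.exists_nonneg
  obtain ⟨r, hr0, hball⟩ := Metric.eventually_nhds_iff_ball.1 (hdiff.and hc.bound)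
  refine .of_bound c (mem_of_superset (Metric.ball_mem_nhds x₀ hr0) fun y hy => ?_)
  have hsub : Metric.closedBall x₀ ‖y - x₀‖ ⊆ Metric.ball x₀ r :=
    Metric.closedBall_subset_ball (by rwa [← dist_eq_norm])
  have hmvt := (convex_closedBall x₀ ‖y - x₀‖).norm_image_sub_le_of_norm_fderiv_le
    (fun z hz => (hball z (hsub hz)).1)
    (fun z hz => (hball z (hsub hz)).2.trans (mul_le_mul_of_nonneg_left
      (by rwa [Metric.mem_closedBall, dist_eq_norm] at hz) hc0))
    (Metric.mem_closedBall_self (norm_nonneg _)) (by rw [Metric.mem_closedBall, dist_eq_norm])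
  simpa [mul_assoc, sq] using hmvt

theorem ContDiffAt.isBigO_sub_sq_norm_gradient {F : Type*} [NormedAddCommGroup F]
    [InnerProductSpace ℝ F] [CompleteSpace F] {f : F → ℝ} {x₀ : F} (hf : ContDiffAt ℝ 2 f x₀)
    (hcrit : gradient f x₀ = 0) {A : F ≃L[ℝ] F}
    (hA : (A : F →L[ℝ] F) = fderiv ℝ (gradient f) x₀) :
    (fun y => f y - f x₀) =O[𝓝 x₀] fun y => ‖gradient f y‖ ^ 2 := by
  have hgrad : HasFDerivAt (gradient f) (A : F →L[ℝ] F) x₀ :=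
    hA ▸ hf.differentiableAt_gradient.hasFDerivAt
  have hupper : fderiv ℝ f =O[𝓝 x₀] fun y => y - x₀ := by
    refine isBigO_norm_left.mp ?_
    simpa only [norm_fderiv_eq_norm_gradient, hcrit, sub_zero] using hgrad.isBigO_sub.norm_left
  have hlower : (fun y => y - x₀) =O[𝓝 x₀] gradient f := by
    simpa only [hcrit, sub_zero] using hgrad.isBigO_sub_rev
  have hdiff : ∀ᶠ y in 𝓝 x₀, DifferentiableAt ℝ f y :=
    (hf.eventually (by simp)).mono fun y hy => hy.differentiableAt two_ne_zero
  exact (isBigO_sub_sq_of_fderiv_isBigO hdiff hupper).trans (hlower.norm_norm.pow 2)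

theorem exists_pos_forall_le_of_eventually_le {u : ℕ → ℝ} {B : ℝ}
    (h : ∀ᶠ n in atTop, u n ≤ B) : ∃ M > 0, ∀ n, u n ≤ M := by
  obtain ⟨M, hM⟩ := (isBoundedUnder_of_eventually_le h).bddAbove_range
  exact ⟨max M 1, by positivity, fun n => (hM ⟨n, rfl⟩).trans (le_max_left _ _)⟩

theorem armijo_learning_rates_bounded_general {k : ℕ} (α : ℝ) (hα0 : 0 < α)
    (f : EuclideanSpace ℝ (Fin k) → ℝ)
    (xlim : EuclideanSpace ℝ (Fin k))
    (hf2 : ∃ u ∈ nhds xlim, ContDiffOn ℝ 2 f u)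
    (x : ℕ → EuclideanSpace ℝ (Fin k)) (δ : ℕ → ℝ)
    (hδpos : ∀ n, 0 < δ n)
    (harmijo : ∀ n, f (x (n + 1)) - f (x n) ≤ -α * δ n * ‖gradient f (x n)‖ ^ 2)
    (hconv : Tendsto x atTop (nhds xlim))
    (hcrit : gradient f xlim = 0)
    (A : EuclideanSpace ℝ (Fin k) ≃L[ℝ] EuclideanSpace ℝ (Fin k))
    (hA : (A : EuclideanSpace ℝ (Fin k) →L[ℝ] EuclideanSpace ℝ (Fin k)) =
      fderiv ℝ (gradient f) xlim)
    (hgradne : ∀ n, gradient f (x n) ≠ 0) :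
    ∃ M > 0, ∀ n, δ n ≤ M := by
  obtain ⟨u, hu, hfu⟩ := hf2
  have hf : ContDiffAt ℝ 2 f xlim := hfu.contDiffAt hu
  have hdecrease (n : ℕ) : α * δ n * ‖gradient f (x n)‖ ^ 2 ≤ f (x n) - f (x (n + 1)) := by
    linarith [harmijo n]
  have hanti : Antitone (f ∘ x) := antitone_nat_of_succ_le fun n => by
    have : 0 ≤ α * δ n * ‖gradient f (x n)‖ ^ 2 := by have := hδpos n; positivity
    simp only [Function.comp_apply]
    linarith [hdecrease n]
  have hge : ∀ n, f xlim ≤ f (x n) := hanti.le_of_tendsto (hf.continuousAt.tendsto.comp hconv)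
  obtain ⟨K, hK⟩ := ((hf.isBigO_sub_sq_norm_gradient hcrit hA).comp_tendsto hconv).bound
  refine exists_pos_forall_le_of_eventually_le (B := K / α) (hK.mono fun n hn => ?_)
  have hg : 0 < ‖gradient f (x n)‖ ^ 2 := by have := hgradne n; positivity
  rw [le_div_iff₀ hα0]
  refine le_of_mul_le_mul_right ?_ hg
  calc δ n * α * ‖gradient f (x n)‖ ^ 2 ≤ f (x n) - f (x (n + 1)) := by linarith [hdecrease n]
    _ ≤ f (x n) - f xlim := by linarith [hge (n + 1)]
    _ ≤ K * ‖gradient f (x n)‖ ^ 2 := by simpa using (le_abs_self _).trans hn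

/-- If a sequence satisfying Armijo's condition converges to a non-degenerate critical
point of a `C¹` function which is `C²` nearby, then the learning rates `δ n` are
bounded. -/
theorem armijo_learning_rates_bounded {k : ℕ} (α : ℝ) (hα0 : 0 < α) (hα1 : α < 1)
    (f : EuclideanSpace ℝ (Fin k) → ℝ) (hf : ContDiff ℝ 1 f)
    (xlim : EuclideanSpace ℝ (Fin k))
    (hf2 : ∃ u ∈ nhds xlim, ContDiffOn ℝ 2 f u)
    (x : ℕ → EuclideanSpace ℝ (Fin k)) (δ : ℕ → ℝ)
    (hδpos : ∀ n, 0 < δ n)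
    (hupdate : ∀ n, x (n + 1) = x n - δ n • gradient f (x n))
    (harmijo : ∀ n, f (x (n + 1)) - f (x n) ≤ -α * δ n * ‖gradient f (x n)‖ ^ 2)
    (hconv : Tendsto x atTop (nhds xlim))
    (hcrit : gradient f xlim = 0)
    (A : EuclideanSpace ℝ (Fin k) ≃L[ℝ] EuclideanSpace ℝ (Fin k))
    (hA : (A : EuclideanSpace ℝ (Fin k) →L[ℝ] EuclideanSpace ℝ (Fin k)) =
      fderiv ℝ (gradient f) xlim)
    (hgradne : ∀ n, gradient f (x n) ≠ 0) :
    ∃ M > 0, ∀ n, δ n ≤ M :=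
  armijo_learning_rates_bounded_general α hα0 f xlim hf2 x δ hδpos harmijo hconv hcrit A hA hgradne
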